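/- arXiv:2508.07324 — 3 statements merged into one kernel-verified Lean document; each statement's English description precedes it below -/
import Mathlib

section
/- Define A : (0,∞) → ℝ by A(t) = 3√3 · t · e^{−2/(27 t²)} · ∫₀^∞ cos(t x³) e^{−x²} dx. Then A satisfies the modified Bessel-type differential equation (t²/4) A″(t) + (t/4) A′(t) − (4/(729 t⁴) + 1/9) A(t) = 0 for every t > 0. -/
/-!
Differentiating twice under the integral sign, `F t = ∫₀^∞ cos (t x³) e^{-x²} dx` satisfies
`27 t³ F'' + (81 t² + 8) F' + 15 t F = 0`: the integrand of the left-hand side is the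
`x`-derivative of `cosCubicPrimitive t`, which vanishes at `0` and at `∞`. Substituting
`A t = 3√3 t e^{-2/(27 t²)} F t` turns this equation into the Bessel-type one.
-/

open MeasureTheory Real Set Filter Topology

noncomputable def cubicMoment (f : ℝ → ℝ) (n : ℕ) (t : ℝ) : ℝ :=
  ∫ x in Ioi 0, x ^ n * f (t * x ^ 3) * exp (-x ^ 2)

lemma norm_pow_mul_mul_exp_neg_sq_le {x y C : ℝ} (n : ℕ) (hx : 0 ≤ x) (hy : |y| ≤ C) :
    ‖x ^ n * y * exp (-x ^ 2)‖ ≤ C * (x ^ n * exp (-x ^ 2)) := by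
  have hxn : 0 ≤ x ^ n * exp (-x ^ 2) := by positivity
  rw [mul_right_comm, norm_mul, norm_of_nonneg hxn, norm_eq_abs, mul_comm]
  exact mul_le_mul_of_nonneg_right hy hxn

lemma integrableOn_pow_mul_exp_neg_sq (n : ℕ) :
    IntegrableOn (fun x : ℝ => x ^ n * exp (-x ^ 2)) (Ioi 0) := by
  have h := integrableOn_rpow_mul_exp_neg_mul_sq (b := 1) one_pos
    (s := n) (by linarith [(Nat.cast_nonneg n : (0 : ℝ) ≤ n)])
  refine h.congr_fun (fun x _ => ?_) measurableSet_Ioi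
  simp only [rpow_natCast, neg_one_mul]

lemma tendsto_pow_mul_exp_neg_sq_atTop (n : ℕ) :
    Tendsto (fun x : ℝ => x ^ n * exp (-x ^ 2)) atTop (𝓝 0) := by
  refine squeeze_zero' ?_ ?_ (tendsto_pow_mul_exp_neg_atTop_nhds_zero n)
  · filter_upwards [eventually_ge_atTop 0] with x hx
    positivity
  · filter_upwards [eventually_ge_atTop 1] with x hx
    gcongr
    nlinarith

section

variable {g : ℝ → ℝ} {C : ℝ}

lemma integrableOn_pow_mul_mul_exp_neg_sq (n : ℕ) (hg : Continuous g) (hC : ∀ x, |g x| ≤ C) :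
    IntegrableOn (fun x => x ^ n * g x * exp (-x ^ 2)) (Ioi 0) := by
  refine ((integrableOn_pow_mul_exp_neg_sq n).const_mul C).mono'
    (by fun_prop : Continuous fun x => x ^ n * g x * exp (-x ^ 2)).aestronglyMeasurable ?_
  filter_upwards [ae_restrict_mem measurableSet_Ioi] with x hx
  exact norm_pow_mul_mul_exp_neg_sq_le n hx.le (hC x)

lemma tendsto_pow_mul_mul_exp_neg_sq_atTop (n : ℕ) (hC : ∀ x, |g x| ≤ C) :
    Tendsto (fun x => x ^ n * g x * exp (-x ^ 2)) atTop (𝓝 0) := by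
  refine squeeze_zero_norm' ?_ (by simpa using (tendsto_pow_mul_exp_neg_sq_atTop n).const_mul C)
  filter_upwards [eventually_ge_atTop 0] with x hx
  exact norm_pow_mul_mul_exp_neg_sq_le n hx (hC x)

lemma hasDerivAt_cubicMoment {f f' : ℝ → ℝ} (n : ℕ) (hf : ∀ y, HasDerivAt f (f' y) y)
    (hf' : Continuous f') (hfC : ∀ y, |f y| ≤ C) (hf'C : ∀ y, |f' y| ≤ C) (t : ℝ) :
    HasDerivAt (cubicMoment f n) (cubicMoment f' (n + 3) t) t := by
  have hfc : Continuous f := continuous_iff_continuousAt.2 fun y => (hf y).continuousAt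
  refine (hasDerivAt_integral_of_dominated_loc_of_deriv_le
    (F' := fun τ x => x ^ (n + 3) * f' (τ * x ^ 3) * exp (-x ^ 2))
    (Metric.ball_mem_nhds t one_pos)
    (Eventually.of_forall fun τ => (integrableOn_pow_mul_mul_exp_neg_sq n (by fun_prop)
      fun _ => hfC _).aestronglyMeasurable)
    (integrableOn_pow_mul_mul_exp_neg_sq n (by fun_prop) fun _ => hfC _)
    (integrableOn_pow_mul_mul_exp_neg_sq (n + 3) (by fun_prop)
      fun _ => hf'C _).aestronglyMeasurable
    ?_ ((integrableOn_pow_mul_exp_neg_sq (n + 3)).const_mul C) ?_).2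
  · filter_upwards [ae_restrict_mem measurableSet_Ioi] with x hx τ _
    exact norm_pow_mul_mul_exp_neg_sq_le (n + 3) hx.le (hf'C _)
  · refine Eventually.of_forall fun x τ _ => ?_
    have := (((hf _).comp τ (hasDerivAt_mul_const (x ^ 3))).const_mul (x ^ n)).mul_const
      (exp (-x ^ 2))
    exact this.congr_deriv (by ring)

end

noncomputable def cosCubicPrimitive (t x : ℝ) : ℝ :=
  ((-9 * t ^ 2 * x ^ 4 + 4 * x ^ 2 + 4) * sin (t * x ^ 3)
    + (6 * t * x ^ 3 + 15 * t * x) * cos (t * x ^ 3)) * exp (-x ^ 2)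

lemma hasDerivAt_cosCubicPrimitive (t x : ℝ) :
    HasDerivAt (cosCubicPrimitive t)
      (27 * t ^ 3 * (x ^ 6 * -cos (t * x ^ 3) * exp (-x ^ 2))
        + (81 * t ^ 2 + 8) * (x ^ 3 * -sin (t * x ^ 3) * exp (-x ^ 2))
        + 15 * t * (x ^ 0 * cos (t * x ^ 3) * exp (-x ^ 2))) x := by
  have hx3 : HasDerivAt (fun x => t * x ^ 3) (t * (3 * x ^ 2)) x := by
    simpa using (hasDerivAt_pow 3 x).const_mul t
  have hP : HasDerivAt (fun x => -9 * t ^ 2 * x ^ 4 + 4 * x ^ 2 + 4)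
      (-9 * t ^ 2 * (4 * x ^ 3) + 4 * (2 * x)) x :=
    ((((hasDerivAt_pow 4 x).const_mul (-9 * t ^ 2)).add
      ((hasDerivAt_pow 2 x).const_mul 4)).add_const 4).congr_deriv (by push_cast; ring)
  have hQ : HasDerivAt (fun x => 6 * t * x ^ 3 + 15 * t * x) (6 * t * (3 * x ^ 2) + 15 * t) x :=
    (((hasDerivAt_pow 3 x).const_mul (6 * t)).add
      ((hasDerivAt_id x).const_mul (15 * t))).congr_deriv (by push_cast; ring)
  have hexp : HasDerivAt (fun x => exp (-x ^ 2)) (exp (-x ^ 2) * -(2 * x)) x := by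
    simpa using ((hasDerivAt_pow 2 x).neg).exp
  exact (((hP.mul hx3.sin).add (hQ.mul hx3.cos)).mul hexp).congr_deriv
    (by simp only [Pi.mul_apply, Pi.add_apply]; ring)

lemma tendsto_cosCubicPrimitive_atTop (t : ℝ) :
    Tendsto (cosCubicPrimitive t) atTop (𝓝 0) := by
  have hsin (n : ℕ) := tendsto_pow_mul_mul_exp_neg_sq_atTop n (g := fun x => sin (t * x ^ 3))
    fun _ => abs_sin_le_one _
  have hcos (n : ℕ) := tendsto_pow_mul_mul_exp_neg_sq_atTop n (g := fun x => cos (t * x ^ 3))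
    fun _ => abs_cos_le_one _
  have h := (((((hsin 4).const_mul (-9 * t ^ 2)).add ((hsin 2).const_mul 4)).add
    ((hsin 0).const_mul 4)).add ((hcos 3).const_mul (6 * t))).add ((hcos 1).const_mul (15 * t))
  simp only [mul_zero, add_zero] at h
  exact h.congr fun x => by simp only [cosCubicPrimitive]; ring

lemma cubicMoment_cos_ode (t : ℝ) :
    27 * t ^ 3 * cubicMoment (fun y => -cos y) 6 t
      + (81 * t ^ 2 + 8) * cubicMoment (fun y => -sin y) 3 t
      + 15 * t * cubicMoment cos 0 t = 0 := by
  have i6 := (integrableOn_pow_mul_mul_exp_neg_sq 6 (g := fun x => -cos (t * x ^ 3))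
    (by fun_prop) fun _ => (abs_neg _).trans_le (abs_cos_le_one _)).const_mul (27 * t ^ 3)
  have i3 := (integrableOn_pow_mul_mul_exp_neg_sq 3 (g := fun x => -sin (t * x ^ 3))
    (by fun_prop) fun _ => (abs_neg _).trans_le (abs_sin_le_one _)).const_mul (81 * t ^ 2 + 8)
  have i0 := (integrableOn_pow_mul_mul_exp_neg_sq 0 (g := fun x => cos (t * x ^ 3))
    (by fun_prop) fun _ => abs_cos_le_one _).const_mul (15 * t)
  have hFTC := integral_Ioi_of_hasDerivAt_of_tendsto'
    (fun x _ => hasDerivAt_cosCubicPrimitive t x) ((i6.add i3).add i0)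
    (tendsto_cosCubicPrimitive_atTop t)
  simp only [cubicMoment, ← integral_const_mul]
  rw [← integral_add i6 i3, ← integral_add (i6.fun_add i3) i0]
  exact hFTC.trans (by simp [cosCubicPrimitive])

lemma hasDerivAt_exp_neg_two_div_mul {u : ℝ → ℝ} {u' t : ℝ} (ht : t ≠ 0)
    (hu : HasDerivAt u u' t) :
    HasDerivAt (fun r => exp (-2 / (27 * r ^ 2)) * u r)
      (exp (-2 / (27 * t ^ 2)) * (4 / (27 * t ^ 3) * u t + u')) t := by
  have hexponent : HasDerivAt (fun r => -2 / (27 * r ^ 2)) (4 / (27 * t ^ 3)) t := by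
    have h := (hasDerivAt_const t (-2 : ℝ)).div ((hasDerivAt_pow 2 t).const_mul 27)
      (by positivity)
    exact h.congr_deriv (by field_simp; ring)
  exact (hexponent.exp.mul hu).congr_deriv (by ring)

lemma bessel_ode_of_cubic_ode {A F F' : ℝ → ℝ} {F'' c t : ℝ} (ht : 0 < t)
    (hA : ∀ r, A r = c * r * exp (-2 / (27 * r ^ 2)) * F r)
    (hF : ∀ r, 0 < r → HasDerivAt F (F' r) r) (hF' : HasDerivAt F' F'' t)
    (hODE : 27 * t ^ 3 * F'' + (81 * t ^ 2 + 8) * F' t + 15 * t * F t = 0) :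
    t ^ 2 / 4 * deriv (deriv A) t + t / 4 * deriv A t -
      (4 / (729 * t ^ 4) + 1 / 9) * A t = 0 := by
  let v := fun r : ℝ => (1 + 4 / (27 * r ^ 2)) * F r + r * F' r
  have hA' : ∀ r, 0 < r → HasDerivAt A (c * (exp (-2 / (27 * r ^ 2)) * v r)) r := by
    intro r hr
    rw [show A = fun r => c * (exp (-2 / (27 * r ^ 2)) * (r * F r)) from
      funext fun r => by rw [hA]; ring]
    refine ((hasDerivAt_exp_neg_two_div_mul hr.ne' ((hasDerivAt_id' r).mul (hF r hr))).const_mul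
      c).congr_deriv ?_
    simp only [v, Pi.mul_apply]
    field_simp
    ring
  have hv : HasDerivAt v (-8 / (27 * t ^ 3) * F t + (1 + 4 / (27 * t ^ 2)) * F' t
      + (F' t + t * F'')) t := by
    have hcoef : HasDerivAt (fun r => 1 + 4 / (27 * r ^ 2)) (-8 / (27 * t ^ 3)) t := by
      have h := ((hasDerivAt_const t (4 : ℝ)).div ((hasDerivAt_pow 2 t).const_mul 27)
        (by positivity)).const_add 1
      exact h.congr_deriv (by field_simp; ring)
    exact ((hcoef.mul (hF t ht)).add ((hasDerivAt_id' t).mul hF')).congr_deriv (by ring)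
  have hA'' : HasDerivAt (deriv A) (c * (exp (-2 / (27 * t ^ 2)) * (4 / (27 * t ^ 3) * v t
      + (-8 / (27 * t ^ 3) * F t + (1 + 4 / (27 * t ^ 2)) * F' t + (F' t + t * F''))))) t := by
    refine ((hasDerivAt_exp_neg_two_div_mul ht.ne' hv).const_mul c).congr_of_eventuallyEq ?_
    filter_upwards [Ioi_mem_nhds ht] with r hr
    exact (hA' r hr).deriv
  rw [hA''.deriv, (hA' t ht).deriv, hA t]
  simp only [v]
  generalize exp (-2 / (27 * t ^ 2)) = E
  linear_combination (norm := (field_simp; ring)) c * E / 108 * hODE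

/-- Let `A t = 3√3 · t · e^{-2/(27 t²)} · ∫₀^∞ cos(t x³) e^{-x²} dx`. Then for
every `t > 0`, `(t²/4) A''(t) + (t/4) A'(t) - (4/(729 t⁴) + 1/9) A(t) = 0`. -/
theorem cosine_integral_satisfies_bessel_ODE
    (A : ℝ → ℝ)
    (hA : ∀ t : ℝ, A t = 3 * Real.sqrt 3 * t * Real.exp (-2 / (27 * t ^ 2)) *
        ∫ x in Set.Ioi (0 : ℝ), Real.cos (t * x ^ 3) * Real.exp (-x ^ 2)) :
    ∀ t : ℝ, 0 < t →
      t ^ 2 / 4 * deriv (deriv A) t + t / 4 * deriv A t -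
        (4 / (729 * t ^ 4) + 1 / 9) * A t = 0 := by
  intro t ht
  have hF (r : ℝ) : HasDerivAt (cubicMoment cos 0) (cubicMoment (fun y => -sin y) 3 r) r :=
    hasDerivAt_cubicMoment 0 hasDerivAt_cos (by fun_prop) abs_cos_le_one
      (fun _ => (abs_neg _).trans_le (abs_sin_le_one _)) r
  have hF' : HasDerivAt (cubicMoment (fun y => -sin y) 3) (cubicMoment (fun y => -cos y) 6 t) t :=
    hasDerivAt_cubicMoment 3 (fun y => (hasDerivAt_sin y).neg) (by fun_prop)
      (fun _ => (abs_neg _).trans_le (abs_sin_le_one _))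
      (fun _ => (abs_neg _).trans_le (abs_cos_le_one _)) t
  refine bessel_ode_of_cubic_ode (c := 3 * √3) ht (fun r => ?_) (fun r _ => hF r) hF'
    (cubicMoment_cos_ode t)
  simp only [hA, cubicMoment, pow_zero, one_mul]
end

section
/- Let f(x) = (1/(3√π)) |x|^{-2/3} e^{-|x|^{2/3}} for x ≠ 0. Then for every natural number n, ∫_ℝ x^{2n} f(x) dx = Γ(3n + 1/2)/√π = (6n−1)!!/2^{3n}, and ∫_ℝ x^{2n+1} f(x) dx = 0, where (6n−1)!! = 1·3·5·⋯·(6n−1) and (−1)!! = 1. -/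
/-!
The density is even, so the odd moments vanish. An even moment `x ^ (2n) f x` is a function of
`|x|`; folding the integral onto `(0, ∞)` leaves `∫₀^∞ t ^ (2n - 2/3) exp (-t ^ (2/3)) dt / (3√π)`,
and the substitution `u = t ^ (2/3)` makes this a Gamma integral, equal to `Γ(3n + 1/2) / √π`.
The product form is the classical `Γ(m + 1/2) = (2m - 1)‼ √π / 2 ^ m`.
-/

open MeasureTheory Real
open scoped Nat

theorem Nat.doubleFactorial_two_mul_sub_one (m : ℕ) :
    (2 * m - 1)‼ = ∏ i ∈ Finset.range m, (2 * i + 1) := by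
  cases m with
  | zero => rfl
  | succ k =>
    rw [show 2 * (k + 1) - 1 = 2 * k + 1 by omega, Nat.doubleFactorial_eq_prod_odd,
      Finset.prod_range_succ']
    simp

theorem Real.Gamma_nat_add_half_div_sqrt_pi (m : ℕ) :
    Gamma (m + 1 / 2) / √π = (∏ i ∈ Finset.range m, (2 * (i : ℝ) + 1)) / 2 ^ m := by
  rw [Gamma_nat_add_half, Nat.doubleFactorial_two_mul_sub_one]
  push_cast
  field_simp

theorem Function.Odd.integral_eq_zero {E : Type*} [NormedAddCommGroup E] [NormedSpace ℝ E]
    {g : ℝ → E} (hg : g.Odd) : ∫ x, g x = 0 := by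
  have h := integral_neg_eq_self g volume
  simp_rw [show ∀ x, g (-x) = -g x from hg, integral_neg] at h
  linear_combination (norm := module) (-(1 / 2 : ℝ)) • h

theorem integral_abs_rpow_mul_exp_neg_abs_rpow {p q : ℝ} (hp : 0 < p) (hq : -1 < q) :
    ∫ x : ℝ, |x| ^ q * exp (-|x| ^ p) = 2 / p * Gamma ((q + 1) / p) := by
  rw [integral_comp_abs (f := fun x => x ^ q * exp (-x ^ p)), integral_rpow_mul_exp_neg_rpow hp hq]
  ring

/-- Let `f x = (1/(3√π)) |x|^{-2/3} e^{-|x|^{2/3}}` (the density of the cube of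
an `N(0,1/2)` random variable). Then for every `n : ℕ`, the even moments are
`∫ x^{2n} f(x) dx = Γ(3n + 1/2)/√π = (6n-1)!!/2^{3n}` and the odd moments are
`∫ x^{2n+1} f(x) dx = 0`, where `(6n-1)!! = ∏_{i=0}^{3n-1} (2i+1)`. -/
theorem moments_of_cube_density
    (f : ℝ → ℝ)
    (hf : ∀ x : ℝ, f x = (1 / (3 * Real.sqrt Real.pi)) * |x| ^ (-(2 : ℝ) / 3) *
        Real.exp (-(|x| ^ ((2 : ℝ) / 3)))) :
    ∀ n : ℕ,
      (∫ x : ℝ, x ^ (2 * n) * f x = Real.Gamma (3 * n + 1 / 2) / Real.sqrt Real.pi) ∧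
      (Real.Gamma (3 * n + 1 / 2) / Real.sqrt Real.pi =
        (∏ i ∈ Finset.range (3 * n), (2 * (i : ℝ) + 1)) / 2 ^ (3 * n)) ∧
      (∫ x : ℝ, x ^ (2 * n + 1) * f x = 0) := by
  intro n
  have f_even : f.Even := fun x => by rw [hf, hf, abs_neg]
  -- needed by `rpow_add'`, which then also covers `x = 0`
  have exponent_ne_zero : (2 * n + -2 / 3 : ℝ) ≠ 0 := by
    intro h
    have : 3 * n = 1 := by exact_mod_cast (by linarith : (3 * n : ℝ) = 1)
    omega
  have moment_eq (x : ℝ) : x ^ (2 * n) * f x =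
      1 / (3 * √π) * (|x| ^ (2 * n + -2 / 3 : ℝ) * exp (-|x| ^ (2 / 3 : ℝ))) := by
    rw [hf, rpow_add' (abs_nonneg x) exponent_ne_zero, ← (even_two_mul n).pow_abs]
    norm_cast
    ring
  refine ⟨?_, by exact_mod_cast Gamma_nat_add_half_div_sqrt_pi (3 * n), ?_⟩
  · simp_rw [moment_eq]
    rw [integral_const_mul, integral_abs_rpow_mul_exp_neg_abs_rpow (by norm_num)
      (by linarith [n.cast_nonneg (α := ℝ)]),
      show (2 * n + -2 / 3 + 1) / (2 / 3) = (3 * n + 1 / 2 : ℝ) by ring]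
    field_simp
  · refine Function.Odd.integral_eq_zero fun x => ?_
    rw [f_even, Odd.neg_pow ⟨n, rfl⟩, neg_mul]
end

section
/- Let f(x) = (1/(3√π)) |x|^{-2/3} e^{-|x|^{2/3}} for x ≠ 0. Then ∫_{−∞}^{∞} (ln f(x))/(1 + x²) dx = −π (ln 3 + (1/2) ln π + 2). In particular this integral is finite, so f satisfies the Krein condition ∫_{−∞}^{∞} (ln f(x))/(1+x²) dx > −∞. -/
/-! On `(0, ∞)` one has `ln f(t) = c - (2/3) ln t - t ^ (2/3)`, and the integrand is even,
so the integral is twice one over `(0, ∞)`. There `∫ ln t / (1 + t²) = 0` by the inversion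
`t ↦ 1/t`, while `t = u³` turns `∫ t ^ (2/3) / (1 + t²)` into `3 ∫ u⁴ / (1 + u⁶)`.
Inversion shows `∫ u⁴ / (1 + u⁶) = ∫ 1 / (1 + u⁶)`, and
`(1 + u⁴) / (1 + u⁶) = 1 / (1 + u²) + u² / (1 + u⁶)` gives their sum as `π/2 + π/6`,
so `∫ t ^ (2/3) / (1 + t²) = π`. -/

open MeasureTheory Real Set

section Substitution

variable {E : Type*} [NormedAddCommGroup E]

theorem integrable_comp_abs_of_integrableOn_Ioi {g : ℝ → E} (hg : IntegrableOn g (Ioi 0)) :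
    Integrable (fun x => g |x|) := by
  have hright : IntegrableOn (fun x => g |x|) (Ioi 0) :=
    hg.congr_fun (fun x hx => by rw [abs_of_pos hx]) measurableSet_Ioi
  have hleft : IntegrableOn (fun x => g |x|) (Iic 0) := by
    have hneg : MeasurableEmbedding fun x : ℝ => -x := (Homeomorph.neg ℝ).measurableEmbedding
    rw [← Measure.map_neg_eq_self (volume : Measure ℝ), hneg.integrableOn_map_iff]
    simpa [Function.comp_def] using Iff.mpr integrableOn_Ici_iff_integrableOn_Ioi hright
  rw [← integrableOn_univ, ← Iic_union_Ioi (a := (0 : ℝ))]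
  exact hleft.union hright

variable [NormedSpace ℝ E]

theorem integral_Ioi_inv_sq_smul_comp_inv (g : ℝ → E) :
    ∫ x in Ioi (0 : ℝ), (x ^ 2)⁻¹ • g x⁻¹ = ∫ x in Ioi (0 : ℝ), g x := by
  rw [← integral_comp_rpow_Ioi g (p := -1) (by norm_num)]
  refine setIntegral_congr_fun measurableSet_Ioi fun x hx => ?_
  rw [show (-1 : ℝ) - 1 = -2 by norm_num, rpow_neg (le_of_lt hx), rpow_neg_one, rpow_two,
    abs_neg, abs_one, one_mul]

theorem integral_Ioi_smul_comp_cube (g : ℝ → E) :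
    ∫ x in Ioi (0 : ℝ), (3 * x ^ 2) • g (x ^ 3) = ∫ x in Ioi (0 : ℝ), g x := by
  rw [← integral_comp_rpow_Ioi g (p := 3) (by norm_num)]
  refine setIntegral_congr_fun measurableSet_Ioi fun x _ => ?_
  norm_num

end Substitution

theorem integrableOn_Ioi_rpow_div_one_add_rpow {s p : ℝ} (hs : -1 < s) (hsp : s + 1 < p) :
    IntegrableOn (fun x : ℝ => x ^ s / (1 + x ^ p)) (Ioi 0) := by
  have hmeas : AEStronglyMeasurable (fun x : ℝ => x ^ s / (1 + x ^ p)) :=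
    ((measurable_id.pow_const s).div
      (measurable_const.add (measurable_id.pow_const p))).aestronglyMeasurable
  rw [← Ioo_union_Ici_eq_Ioi one_pos]
  refine IntegrableOn.union ?_ ?_
  · refine ((intervalIntegral.integrableOn_Ioo_rpow_iff one_pos).2 hs).mono' hmeas.restrict ?_
    filter_upwards [ae_restrict_mem measurableSet_Ioo] with x hx
    have hxs := rpow_pos_of_pos hx.1 s
    have hxp := rpow_nonneg hx.1.le p
    rw [norm_of_nonneg (by positivity)]
    exact div_le_self hxs.le (by linarith)
  · refine (Iff.mpr integrableOn_Ici_iff_integrableOn_Ioi (integrableOn_Ioi_rpow_of_lt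
      (by linarith : s - p < -1) one_pos)).mono' hmeas.restrict ?_
    filter_upwards [ae_restrict_mem measurableSet_Ici] with x (hx : 1 ≤ x)
    have hx0 : 0 < x := one_pos.trans_le hx
    have hxs := rpow_pos_of_pos hx0 s
    have hxp := rpow_pos_of_pos hx0 p
    rw [norm_of_nonneg (by positivity), rpow_sub hx0]
    exact div_le_div_of_nonneg_left hxs.le hxp (by linarith)

theorem abs_log_le_two_mul_rpow_add {x : ℝ} (hx : 0 < x) :
    |log x| ≤ 2 * x ^ (1 / 2 : ℝ) + 2 * x ^ (-(1 / 2) : ℝ) := by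
  have hpos := log_le_rpow_div hx.le (one_half_pos (α := ℝ))
  have hneg := log_le_rpow_div (inv_nonneg.2 hx.le) (one_half_pos (α := ℝ))
  rw [log_inv, inv_rpow hx.le, ← rpow_neg hx.le] at hneg
  have h1 := rpow_pos_of_pos hx (1 / 2 : ℝ)
  have h2 := rpow_pos_of_pos hx (-(1 / 2) : ℝ)
  rw [abs_le]
  constructor <;> linarith

theorem integrableOn_Ioi_log_div_one_add_sq :
    IntegrableOn (fun x : ℝ => log x / (1 + x ^ 2)) (Ioi 0) := by
  have hbound : IntegrableOn (fun x : ℝ =>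
      2 * (x ^ (1 / 2 : ℝ) / (1 + x ^ 2)) + 2 * (x ^ (-(1 / 2) : ℝ) / (1 + x ^ 2)))
      (Ioi 0) := by
    have h₁ : IntegrableOn (fun x : ℝ => x ^ (1 / 2 : ℝ) / (1 + x ^ 2)) (Ioi 0) := by
      simpa using integrableOn_Ioi_rpow_div_one_add_rpow (p := 2) (by norm_num) (by norm_num)
    have h₂ : IntegrableOn (fun x : ℝ => x ^ (-(1 / 2) : ℝ) / (1 + x ^ 2)) (Ioi 0) := by
      simpa using integrableOn_Ioi_rpow_div_one_add_rpow (p := 2) (by norm_num) (by norm_num)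
    exact (h₁.const_mul 2).add (h₂.const_mul 2)
  refine hbound.mono'
    (measurable_log.div (measurable_const.add (measurable_id.pow_const 2))).aestronglyMeasurable ?_
  filter_upwards [ae_restrict_mem measurableSet_Ioi] with x (hx : 0 < x)
  rw [norm_div, norm_of_nonneg (by positivity : (0 : ℝ) ≤ 1 + x ^ 2), Real.norm_eq_abs]
  calc |log x| / (1 + x ^ 2)
      ≤ (2 * x ^ (1 / 2 : ℝ) + 2 * x ^ (-(1 / 2) : ℝ)) / (1 + x ^ 2) := by
        gcongr; exact abs_log_le_two_mul_rpow_add hx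
    _ = _ := by ring

theorem integral_Ioi_log_div_one_add_sq : ∫ x in Ioi (0 : ℝ), log x / (1 + x ^ 2) = 0 := by
  have h :
      ∫ x in Ioi (0 : ℝ), log x / (1 + x ^ 2) = -∫ x in Ioi (0 : ℝ), log x / (1 + x ^ 2) :=
    calc ∫ x in Ioi (0 : ℝ), log x / (1 + x ^ 2)
        = ∫ x in Ioi (0 : ℝ), (x ^ 2)⁻¹ • (log x⁻¹ / (1 + x⁻¹ ^ 2)) :=
          (integral_Ioi_inv_sq_smul_comp_inv _).symm
      _ = ∫ x in Ioi (0 : ℝ), -(log x / (1 + x ^ 2)) := by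
          refine setIntegral_congr_fun measurableSet_Ioi fun x (hx : 0 < x) => ?_
          rw [smul_eq_mul, log_inv]
          field_simp
          ring
      _ = _ := integral_neg _
  linarith

theorem integral_Ioi_sq_div_one_add_pow_six :
    ∫ x in Ioi (0 : ℝ), x ^ 2 / (1 + x ^ 6) = π / 6 := by
  calc ∫ x in Ioi (0 : ℝ), x ^ 2 / (1 + x ^ 6)
      = (1 / 3) * ∫ x in Ioi (0 : ℝ), (3 * x ^ 2) • (1 + (x ^ 3) ^ 2)⁻¹ := by
        rw [← integral_const_mul]
        refine setIntegral_congr_fun measurableSet_Ioi fun x _ => ?_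
        simp only [smul_eq_mul]
        ring
    _ = π / 6 := by
        rw [integral_Ioi_smul_comp_cube (fun x => (1 + x ^ 2)⁻¹), integral_Ioi_inv_one_add_sq,
          arctan_zero]
        ring

theorem integral_Ioi_pow_four_div_one_add_pow_six :
    ∫ x in Ioi (0 : ℝ), x ^ 4 / (1 + x ^ 6) = π / 3 := by
  have hint (k : ℕ) (hk : k + 1 < 6) :
      IntegrableOn (fun x : ℝ => x ^ k / (1 + x ^ 6)) (Ioi 0) := by
    simpa using integrableOn_Ioi_rpow_div_one_add_rpow (s := k) (p := 6)
      (neg_one_lt_zero.trans_le k.cast_nonneg) (by exact_mod_cast hk)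
  have hinv :
      ∫ x in Ioi (0 : ℝ), x ^ 0 / (1 + x ^ 6) =
        ∫ x in Ioi (0 : ℝ), x ^ 4 / (1 + x ^ 6) := by
    rw [← integral_Ioi_inv_sq_smul_comp_inv (fun x : ℝ => x ^ 4 / (1 + x ^ 6))]
    refine setIntegral_congr_fun measurableSet_Ioi fun x (hx : 0 < x) => ?_
    rw [smul_eq_mul, inv_pow, inv_pow]
    field_simp
    ring
  -- `1 + x ^ 6 = (1 + x ^ 2) * (1 - x ^ 2 + x ^ 4)`
  have hsplit : ∫ x in Ioi (0 : ℝ), (x ^ 0 / (1 + x ^ 6) + x ^ 4 / (1 + x ^ 6)) =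
      ∫ x in Ioi (0 : ℝ), ((1 + x ^ 2)⁻¹ + x ^ 2 / (1 + x ^ 6)) := by
    refine setIntegral_congr_fun measurableSet_Ioi fun x _ => ?_
    field_simp
    ring
  rw [integral_add (hint 0 (by norm_num)) (hint 4 (by norm_num)),
    integral_add integrable_inv_one_add_sq.integrableOn (hint 2 (by norm_num)),
    hinv, integral_Ioi_inv_one_add_sq, arctan_zero, integral_Ioi_sq_div_one_add_pow_six] at hsplit
  linarith

theorem integrableOn_Ioi_rpow_two_thirds_div_one_add_sq :
    IntegrableOn (fun x : ℝ => x ^ (2 / 3 : ℝ) / (1 + x ^ 2)) (Ioi 0) := by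
  simpa using integrableOn_Ioi_rpow_div_one_add_rpow (s := 2 / 3) (p := 2) (by norm_num)
    (by norm_num)

theorem integral_Ioi_rpow_two_thirds_div_one_add_sq :
    ∫ x in Ioi (0 : ℝ), x ^ (2 / 3 : ℝ) / (1 + x ^ 2) = π := by
  rw [← integral_Ioi_smul_comp_cube, show π = 3 * (π / 3) by ring,
    ← integral_Ioi_pow_four_div_one_add_pow_six, ← integral_const_mul]
  refine setIntegral_congr_fun measurableSet_Ioi fun x (hx : 0 < x) => ?_
  rw [smul_eq_mul, ← rpow_natCast x 3, ← rpow_mul hx.le]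
  norm_num
  ring

section KreinIntegrand

variable (a b : ℝ)

theorem integrableOn_Ioi_sub_mul_log_sub_rpow_div_one_add_sq :
    IntegrableOn (fun x : ℝ => (a - b * log x - x ^ (2 / 3 : ℝ)) / (1 + x ^ 2)) (Ioi 0) := by
  simp_rw [sub_div, mul_div_assoc, div_eq_mul_inv a]
  exact ((integrable_inv_one_add_sq.integrableOn.const_mul a).sub
    (integrableOn_Ioi_log_div_one_add_sq.const_mul b)).sub
    integrableOn_Ioi_rpow_two_thirds_div_one_add_sq

theorem integral_Ioi_sub_mul_log_sub_rpow_div_one_add_sq :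
    ∫ x in Ioi (0 : ℝ), (a - b * log x - x ^ (2 / 3 : ℝ)) / (1 + x ^ 2) =
      a * (π / 2) - π := by
  have hconst : IntegrableOn (fun x : ℝ => a * (1 + x ^ 2)⁻¹) (Ioi 0) :=
    integrable_inv_one_add_sq.integrableOn.const_mul a
  have hlog : IntegrableOn (fun x : ℝ => b * (log x / (1 + x ^ 2))) (Ioi 0) :=
    integrableOn_Ioi_log_div_one_add_sq.const_mul b
  simp_rw [sub_div, mul_div_assoc, div_eq_mul_inv a]
  rw [integral_sub (by exact hconst.sub hlog) integrableOn_Ioi_rpow_two_thirds_div_one_add_sq,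
    integral_sub hconst hlog, integral_const_mul, integral_const_mul, integral_Ioi_inv_one_add_sq,
    arctan_zero, integral_Ioi_log_div_one_add_sq, integral_Ioi_rpow_two_thirds_div_one_add_sq]
  ring

end KreinIntegrand

theorem log_cube_density {x : ℝ} (hx : 0 < x) :
    log (1 / (3 * √π) * x ^ (-(2 : ℝ) / 3) * exp (-(x ^ ((2 : ℝ) / 3)))) =
      -(log 3 + 1 / 2 * log π) - 2 / 3 * log x - x ^ ((2 : ℝ) / 3) := by
  rw [log_mul (by positivity) (exp_ne_zero _), log_mul (by positivity) (by positivity), log_exp,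
    log_rpow hx, one_div, log_inv, log_mul three_ne_zero (by positivity), log_sqrt pi_pos.le]
  ring

/-- Let `f x = (1/(3√π)) |x|^{-2/3} e^{-|x|^{2/3}}` (the density of the cube of
an `N(0,1/2)` random variable). Then `(ln f(x))/(1+x²)` is integrable on `ℝ`
(so the Krein integral is `> -∞`) and
`∫_ℝ (ln f(x))/(1+x²) dx = -π (ln 3 + (1/2) ln π + 2)`. -/
theorem krein_integral_of_cube_density
    (f : ℝ → ℝ)
    (hf : ∀ x : ℝ, f x = (1 / (3 * Real.sqrt Real.pi)) * |x| ^ (-(2 : ℝ) / 3) *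
        Real.exp (-(|x| ^ ((2 : ℝ) / 3)))) :
    Integrable (fun x : ℝ => Real.log (f x) / (1 + x ^ 2)) ∧
    ∫ x : ℝ, Real.log (f x) / (1 + x ^ 2) =
      -Real.pi * (Real.log 3 + (1 / 2) * Real.log Real.pi + 2) := by
  set g : ℝ → ℝ := fun t =>
    log (1 / (3 * √π) * t ^ (-(2 : ℝ) / 3) * exp (-(t ^ ((2 : ℝ) / 3)))) / (1 + t ^ 2)
  have hfg : (fun x => log (f x) / (1 + x ^ 2)) = fun x => g |x| := by
    funext x
    simp only [g, hf, sq_abs]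
  have hg : EqOn g (fun t => (-(log 3 + 1 / 2 * log π) - 2 / 3 * log t - t ^ (2 / 3 : ℝ)) /
      (1 + t ^ 2)) (Ioi 0) := fun t ht => by
    simp only [g, log_cube_density ht]
  rw [hfg, integral_comp_abs, setIntegral_congr_fun measurableSet_Ioi hg,
    integral_Ioi_sub_mul_log_sub_rpow_div_one_add_sq]
  refine ⟨integrable_comp_abs_of_integrableOn_Ioi ?_, by ring⟩
  exact (integrableOn_Ioi_sub_mul_log_sub_rpow_div_one_add_sq _ _).congr_fun hg.symm
    measurableSet_Ioi
end
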